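/- arXiv:1110.1834 — 2 statements merged into one kernel-verified Lean document; each statement's English description precedes it below -/
import Mathlib

section
/- Let α > 0 and β ∈ ℝ. Then there exists a constant κ > 0 (depending only on α and β) such that for every real x ≥ 0, the principal square root w = √((α+iβ)² + x) satisfies Re w > 0 and |Im w| ≤ κ · Re w. -/
/-!
Write `w` for the principal square root of `(α + iβ)² + x`. This number avoids the closed negative
real axis, so `Re w > 0`. Comparing imaginary parts in `w² = (α + iβ)² + x` gives
`Re w · Im w = αβ`; comparing real parts gives `Re w ≥ α`, since otherwise also `|Im w| < |β|`,
contradicting the product identity. Hence `|Im w| = α|β| / Re w ≤ |β| ≤ (|β| / α) Re w`.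
-/

namespace Complex

theorem re_cpow_pos_of_mem_slitPlane {z : ℂ} (hz : z ∈ slitPlane) {r : ℝ}
    (hr : |r| ≤ 1 / 2) : 0 < (z ^ (r : ℂ)).re := by
  obtain ⟨harg, hz0⟩ := mem_slitPlane_iff_arg.mp hz
  have harg_lt : |z.arg| < Real.pi :=
    abs_lt.mpr ⟨neg_pi_lt_arg z, (arg_le_pi z).lt_of_ne harg⟩
  have hangle : |r * z.arg| < Real.pi / 2 := by
    rw [abs_mul]
    calc |r| * |z.arg| ≤ 1 / 2 * |z.arg| := by gcongr
      _ < Real.pi / 2 := by linarith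
  rw [cpow_def_of_ne_zero hz0, exp_re]
  refine mul_pos (Real.exp_pos _) (Real.cos_pos_of_mem_Ioo ?_)
  have : (log z * r).im = r * z.arg := by simp [log_im, mul_comm]
  rw [this]
  exact abs_lt.mp hangle

theorem sq_add_ofReal_mem_slitPlane {ζ : ℂ} (hζ : ζ.re ≠ 0) {x : ℝ} (hx : 0 ≤ x) :
    ζ ^ 2 + x ∈ slitPlane := by
  rw [mem_slitPlane_iff]
  rcases eq_or_ne ζ.im 0 with hb | hb
  · left
    have hre : (ζ ^ 2 + x).re = ζ.re ^ 2 + x := by simp [sq, hb]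
    rw [hre]
    positivity
  · right
    have him : (ζ ^ 2 + x).im = 2 * ζ.re * ζ.im := by simp [sq]; ring
    rw [him]
    exact mul_ne_zero (mul_ne_zero two_ne_zero hζ) hb

theorem re_mul_im_of_sq_eq_sq_add_ofReal {w ζ : ℂ} {x : ℝ} (h : w ^ 2 = ζ ^ 2 + x) :
    w.re * w.im = ζ.re * ζ.im := by
  have := congrArg im h
  simp only [sq, mul_im, add_im, ofReal_im] at this
  linarith

theorem sq_re_le_sq_re_of_sq_eq_sq_add_ofReal {w ζ : ℂ} {x : ℝ} (hx : 0 ≤ x)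
    (h : w ^ 2 = ζ ^ 2 + x) : ζ.re ^ 2 ≤ w.re ^ 2 := by
  by_contra! hlt
  have hprod : (w.re * w.im) ^ 2 = (ζ.re * ζ.im) ^ 2 := by
    rw [re_mul_im_of_sq_eq_sq_add_ofReal h]
  have him_lt : w.im ^ 2 < ζ.im ^ 2 := by
    have := congrArg re h
    simp only [sq, mul_re, add_re, ofReal_re] at this
    nlinarith
  have hb : 0 < ζ.im ^ 2 := (sq_nonneg _).trans_lt him_lt
  nlinarith [mul_le_mul_of_nonneg_left him_lt.le (sq_nonneg w.re), mul_lt_mul_of_pos_right hlt hb]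

theorem abs_im_mul_abs_re_le_of_sq_eq_sq_add_ofReal {w ζ : ℂ} {x : ℝ} (hx : 0 ≤ x)
    (h : w ^ 2 = ζ ^ 2 + x) : |w.im| * |ζ.re| ≤ |ζ.im| * |w.re| := by
  have hre : |ζ.re| ≤ |w.re| := sq_le_sq.mp (sq_re_le_sq_re_of_sq_eq_sq_add_ofReal hx h)
  have him : |w.re| * |w.im| = |ζ.re| * |ζ.im| := by
    rw [← abs_mul, ← abs_mul, re_mul_im_of_sq_eq_sq_add_ofReal h]
  rcases (abs_nonneg w.re).eq_or_lt with hu | hu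
  · rw [← hu] at hre ⊢
    simp [le_antisymm hre (abs_nonneg _)]
  · refine le_of_mul_le_mul_right ?_ hu
    calc |w.im| * |ζ.re| * |w.re| = |ζ.re| * (|w.re| * |w.im|) := by ring
      _ = |ζ.re| ^ 2 * |ζ.im| := by rw [him]; ring
      _ ≤ |w.re| ^ 2 * |ζ.im| := by gcongr
      _ = |ζ.im| * |w.re| * |w.re| := by ring

end Complex

open Complex in
theorem stmt_3 (α β : ℝ) (hα : 0 < α) :
    ∃ κ : ℝ, 0 < κ ∧ ∀ x : ℝ, 0 ≤ x →
      0 < ((((α : ℂ) + β * I) ^ 2 + (x : ℂ)) ^ ((1 : ℂ) / 2)).re ∧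
      |((((α : ℂ) + β * I) ^ 2 + (x : ℂ)) ^ ((1 : ℂ) / 2)).im| ≤
        κ * ((((α : ℂ) + β * I) ^ 2 + (x : ℂ)) ^ ((1 : ℂ) / 2)).re := by
  refine ⟨|β| / α + 1, by positivity, fun x hx => ?_⟩
  set ζ : ℂ := α + β * I
  have hζre : ζ.re = α := by simp [ζ]
  have hζim : ζ.im = β := by simp [ζ]
  set w := (ζ ^ 2 + x) ^ ((1 : ℂ) / 2)
  have hw_pos : 0 < w.re := by
    have hslit := sq_add_ofReal_mem_slitPlane (hζre ▸ hα.ne') hx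
    have h := re_cpow_pos_of_mem_slitPlane hslit (r := 1 / 2) (by norm_num [abs_of_pos])
    rwa [ofReal_div, ofReal_one, ofReal_ofNat] at h
  have hw_sq : w ^ 2 = ζ ^ 2 + x := by simp only [w, one_div]; exact cpow_ofNat_inv_pow _ 2
  have hsector := abs_im_mul_abs_re_le_of_sq_eq_sq_add_ofReal hx hw_sq
  rw [hζre, hζim, abs_of_pos hα, abs_of_pos hw_pos] at hsector
  refine ⟨hw_pos, ?_⟩
  calc |w.im| ≤ |β| / α * w.re := by rw [div_mul_eq_mul_div, le_div_iff₀ hα]; exact hsector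
    _ ≤ (|β| / α + 1) * w.re := by nlinarith
end

section
/- Let α > 0 and β ∈ ℝ. Then there exists c > 0 depending only on α and β such that for all ε ∈ [0,1], λ ∈ ℝ and ρ ≥ 0: |ε²λ² + ρ + 1 - 2(α+iβ)·iλ| ≥ c·(ε²λ² + ρ + 1 + |λ|). -/
/-!
Write the symbol as `z = (X + 2βλ) - 2iαλ` with `X = ε²λ² + ρ + 1`. Its real part gives
`‖z‖ ≥ X - 2|β||λ|` and its imaginary part `‖z‖ ≥ 2α|λ|`; weighting these two bounds by `α` and
`|β| + 1` and adding gives `α (X + |λ|) ≤ (α + |β| + 1) ‖z‖`, uniformly in `ε`.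
-/

open Complex

lemma re_sub_mul_I_mul (X α β lam : ℝ) :
    ((X : ℂ) - 2 * ((α : ℂ) + β * I) * (I * lam)).re = X + 2 * β * lam := by
  simp

lemma im_sub_mul_I_mul (X α β lam : ℝ) :
    ((X : ℂ) - 2 * ((α : ℂ) + β * I) * (I * lam)).im = -(2 * α * lam) := by
  simp

lemma sub_two_mul_abs_mul_le_norm (X α β lam : ℝ) :
    X - 2 * |β| * |lam| ≤ ‖(X : ℂ) - 2 * ((α : ℂ) + β * I) * (I * lam)‖ := by
  refine le_trans ?_ (abs_re_le_norm _)
  rw [re_sub_mul_I_mul]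
  have h := neg_abs_le (β * lam)
  rw [abs_mul] at h
  linarith [le_abs_self (X + 2 * β * lam)]

lemma two_mul_abs_mul_le_norm (X α β lam : ℝ) (hα : 0 ≤ α) :
    2 * α * |lam| ≤ ‖(X : ℂ) - 2 * ((α : ℂ) + β * I) * (I * lam)‖ := by
  refine le_trans (le_of_eq ?_) (abs_im_le_norm _)
  rw [im_sub_mul_I_mul, abs_neg, abs_mul, abs_of_nonneg (by positivity : (0 : ℝ) ≤ 2 * α)]

lemma div_mul_add_le_of_sub_le_of_le {α b X L N : ℝ} (hα : 0 < α) (hb : 0 ≤ b) (hL : 0 ≤ L)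
    (hre : X - 2 * b * L ≤ N) (him : 2 * α * L ≤ N) :
    α / (α + b + 1) * (X + L) ≤ N := by
  rw [div_mul_eq_mul_div, div_le_iff₀ (by positivity)]
  nlinarith [mul_le_mul_of_nonneg_left hre hα.le,
    mul_le_mul_of_nonneg_left him (by positivity : (0 : ℝ) ≤ b + 1), mul_nonneg hα.le hL]

open Complex in
theorem stmt_13 (α β : ℝ) (hα : 0 < α) :
    ∃ c > (0 : ℝ), ∀ ε : ℝ, 0 ≤ ε → ε ≤ 1 → ∀ lam ρ : ℝ, 0 ≤ ρ →
      c * (ε ^ 2 * lam ^ 2 + ρ + 1 + |lam|) ≤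
        ‖((ε ^ 2 * lam ^ 2 + ρ + 1 : ℝ) - 2 * ((α : ℂ) + β * I) * (I * lam) : ℂ)‖ := by
  refine ⟨α / (α + |β| + 1), by positivity, fun ε _ _ lam ρ _ => ?_⟩
  exact div_mul_add_le_of_sub_le_of_le hα (abs_nonneg β) (abs_nonneg lam)
    (sub_two_mul_abs_mul_le_norm _ α β lam) (two_mul_abs_mul_le_norm _ α β lam hα.le)
end
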